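/- arXiv:1208.6211 — 2 statements merged into one kernel-verified Lean document; each statement's English description precedes it below -/
import Mathlib

section
/- Let n ≥ 1 and t > 0. For all bounded, continuous, ℤ^n-periodic functions f, g : ℝ^n → ℝ one has sup_{x ∈ ℝ^n} |(H(t)f)(x) − (H(t)g)(x)| ≤ sup_{x ∈ ℝ^n} |f(x) − g(x)|; that is, H(t) is a contraction in the sup norm. -/
open MeasureTheory Real Filter

noncomputable section

abbrev E (n : ℕ) := EuclideanSpace ℝ (Fin n)

/-- The Euclidean heat kernel on `ℝ^{n+1} = ℝ^n × ℝ`: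
`Γ(z,t) = (4πt)^{-(n+1)/2} exp(-‖z‖²/(4t))`. -/
def heatKernel (n : ℕ) (z : E n × ℝ) (t : ℝ) : ℝ :=
  (4 * Real.pi * t) ^ (-(((n : ℝ) + 1) / 2)) * Real.exp (-(‖z.1‖ ^ 2 + z.2 ^ 2) / (4 * t))

/-- The subgraph `S_f = {(x, s) : s ≤ f x}`. -/
def subgraph (n : ℕ) (f : E n → ℝ) : Set (E n × ℝ) := {p | p.2 ≤ f p.1}

/-- `w_f(x̃, t) = ∫_{S_f} Γ(x̃ - ỹ, t) dỹ`, the heat evolution of `χ_{S_f}`. -/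
def heatEvol (n : ℕ) (f : E n → ℝ) (p : E n × ℝ) (t : ℝ) : ℝ :=
  ∫ q in subgraph n f, heatKernel n (p - q) t

/-- `ℤ^n`-periodicity. -/
def ZPeriodic (n : ℕ) (g : E n → ℝ) : Prop :=
  ∀ x : E n, ∀ k : Fin n → ℤ, g (x + (WithLp.equiv 2 (Fin n → ℝ)).symm (fun i => (k i : ℝ))) = g x

/-- Membership in the space `B` of bounded continuous `ℤ^n`-periodic functions. -/
def InB (n : ℕ) (g : E n → ℝ) : Prop :=
  (∃ M : ℝ, ∀ x, |g x| ≤ M) ∧ Continuous g ∧ ZPeriodic n g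

/-- Second partial derivative `∂_i ∂_j f (x)`. -/
def secondD (n : ℕ) (f : E n → ℝ) (x : E n) (i j : Fin n) : ℝ :=
  fderiv ℝ (fun y => fderiv ℝ f y (EuclideanSpace.single j 1)) x (EuclideanSpace.single i 1)

/-- The coefficients `a_{ij}(p) = δ_{ij} - p_i p_j / (1 + ‖p‖²)`. -/
def aMat (n : ℕ) (p : E n) (i j : Fin n) : ℝ :=
  (if i = j then (1 : ℝ) else 0) - p i * p j / (1 + ‖p‖ ^ 2)

/-- The outward unit normal `ν(x) = (-∇f(x), 1)/√(1+‖∇f(x)‖²)` to the subgraph. -/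
def nuVec (n : ℕ) (f : E n → ℝ) (x : E n) : E n × ℝ :=
  (Real.sqrt (1 + ‖gradient f x‖ ^ 2))⁻¹ • (-gradient f x, (1 : ℝ))

/-- The `i`-th component of the unit normal, `i : Fin (n+1)`. -/
def nuComp (n : ℕ) (f : E n → ℝ) (x : E n) (i : Fin (n + 1)) : ℝ :=
  if h : (i : ℕ) < n then (nuVec n f x).1 ⟨i, h⟩ else (nuVec n f x).2

/-- The `i`-th coordinate direction in `ℝ^{n+1} = ℝ^n × ℝ`. -/
def dirVec (n : ℕ) (i : Fin (n + 1)) : E n × ℝ :=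
  if h : (i : ℕ) < n then (EuclideanSpace.single ⟨i, h⟩ 1, 0) else (0, 1)

/-- Mean curvature of the graph of `f`. -/
def meanCurv (n : ℕ) (f : E n → ℝ) (x : E n) : ℝ :=
  -(Real.sqrt (1 + ‖gradient f x‖ ^ 2))⁻¹ *
    ∑ i, ∑ j, aMat n (gradient f x) i j * secondD n f x i j

/-- Viscosity solution of the resolvent equation `u - λ Σ a_{ij}(∇u) ∂_i∂_j u = f`. -/
def IsViscosityResolvent (n : ℕ) (lam : ℝ) (f u : E n → ℝ) : Prop :=
  Continuous u ∧
  (∀ x : E n, ∀ φ : E n → ℝ, ContDiff ℝ (⊤ : ℕ∞) φ → (∀ y, u y - φ y ≤ u x - φ x) →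
    u x - lam * ∑ i, ∑ j, aMat n (gradient φ x) i j * secondD n φ x i j ≤ f x) ∧
  (∀ x : E n, ∀ φ : E n → ℝ, ContDiff ℝ (⊤ : ℕ∞) φ → (∀ y, u x - φ x ≤ u y - φ y) →
    f x ≤ u x - lam * ∑ i, ∑ j, aMat n (gradient φ x) i j * secondD n φ x i j)

/-- Viscosity solution of `∂_t u = Σ a_{ij}(∇u) ∂_i∂_j u` on `ℝ^n × (0,∞)`. -/
def IsViscosityFlow (n : ℕ) (u : E n → ℝ → ℝ) : Prop :=
  (∀ x : E n, ∀ t : ℝ, 0 < t → ∀ φ : E n → ℝ → ℝ,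
    ContDiff ℝ (⊤ : ℕ∞) (fun p : E n × ℝ => φ p.1 p.2) →
    (∀ y s, 0 < s → u y s - φ y s ≤ u x t - φ x t) →
    deriv (φ x) t ≤
      ∑ i, ∑ j, aMat n (gradient (fun y => φ y t) x) i j * secondD n (fun y => φ y t) x i j) ∧
  (∀ x : E n, ∀ t : ℝ, 0 < t → ∀ φ : E n → ℝ → ℝ,
    ContDiff ℝ (⊤ : ℕ∞) (fun p : E n × ℝ => φ p.1 p.2) →
    (∀ y s, 0 < s → u x t - φ x t ≤ u y s - φ y s) →
    ∑ i, ∑ j, aMat n (gradient (fun y => φ y t) x) i j * secondD n (fun y => φ y t) x i j ≤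
      deriv (φ x) t)

lemma heatKernel_pos {n : ℕ} {t : ℝ} (ht : 0 < t) (z : E n × ℝ) : 0 < heatKernel n z t := by
  unfold heatKernel
  have h4 : (0:ℝ) < 4 * Real.pi * t := by positivity
  positivity

lemma heatKernel_neg (n : ℕ) (z : E n × ℝ) (t : ℝ) : heatKernel n (-z) t = heatKernel n z t := by
  simp [heatKernel]

lemma gauss_int {n : ℕ} {b : ℝ} (hb : 0 < b) :
    Integrable (fun v : E n => Real.exp (-b * ‖v‖ ^ 2)) := by
  have h := (GaussianFourier.integrable_cexp_neg_mul_sq_norm_add (V := E n) (b := (b : ℂ))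
      (by simpa using hb) 0 0).re
  refine h.congr (Eventually.of_forall fun v => ?_)
  beta_reduce
  rw [show -(b:ℂ) * (‖v‖:ℂ) ^ 2 + 0 * ((inner ℝ (0:E n) v : ℝ) : ℂ) = ((-(b * ‖v‖^2) : ℝ) : ℂ)
      from by push_cast; ring, ← Complex.ofReal_exp]
  simp only [RCLike.re_to_complex, Complex.ofReal_re]
  ring_nf

lemma heatKernel_integrable {n : ℕ} {t : ℝ} (ht : 0 < t) (p : E n × ℝ) :
    Integrable (fun q : E n × ℝ => heatKernel n (p - q) t) := by
  have hb : (0:ℝ) < 1 / (4 * t) := by positivity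
  have h1 : Integrable (fun v : E n => Real.exp (-(1/(4*t)) * ‖v‖ ^ 2)) := gauss_int hb
  have h2 : Integrable (fun x : ℝ => Real.exp (-(1/(4*t)) * x ^ 2)) :=
    integrable_exp_neg_mul_sq hb
  have h3 := (h1.mul_prod h2).const_mul ((4 * Real.pi * t) ^ (-(((n : ℝ) + 1) / 2)))
  have h4 : Integrable (fun z : E n × ℝ => heatKernel n z t) := by
    rw [Measure.volume_eq_prod]
    refine h3.congr (Eventually.of_forall fun z => ?_)
    unfold heatKernel
    simp only
    rw [← Real.exp_add]
    congr 1
    field_simp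
    ring
  haveI : (volume : Measure (E n × ℝ)).IsAddRightInvariant := by
    rw [Measure.volume_eq_prod]; infer_instance
  have h5 := h4.comp_sub_right p
  refine h5.congr (Eventually.of_forall fun q => ?_)
  simp only
  rw [show p - q = -(q - p) by abel, heatKernel_neg]

lemma subgraph_meas {n : ℕ} {f : E n → ℝ} (hf : Continuous f) :
    MeasurableSet (subgraph n f) :=
  measurableSet_le measurable_snd (hf.measurable.comp measurable_fst)

lemma heatEvol_mono {n : ℕ} {t : ℝ} (ht : 0 < t) {f g : E n → ℝ}
    (hfg : ∀ x, f x ≤ g x) (p : E n × ℝ) :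
    heatEvol n f p t ≤ heatEvol n g p t := by
  refine setIntegral_mono_set ((heatKernel_integrable ht p).integrableOn)
    (Eventually.of_forall fun q => (heatKernel_pos ht _).le) ?_
  exact HasSubset.Subset.eventuallyLE fun q hq => le_trans hq (hfg q.1)

lemma heatEvol_shift {n : ℕ} (f : E n → ℝ) (hf : Continuous f) (c : ℝ) (y : E n) (s t : ℝ) :
    heatEvol n (fun x => f x + c) (y, s + c) t = heatEvol n f (y, s) t := by
  haveI : (volume : Measure (E n × ℝ)).IsAddRightInvariant := by
    rw [Measure.volume_eq_prod]; infer_instance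
  unfold heatEvol
  rw [← integral_indicator (subgraph_meas (by continuity)),
    ← integral_indicator (subgraph_meas hf),
    ← integral_add_right_eq_self
      (fun q => (subgraph n fun x => f x + c).indicator
        (fun q => heatKernel n ((y, s + c) - q) t) q) (((0 : E n), c))]
  congr 1
  ext q
  have hmem : q + (((0:E n), c)) ∈ subgraph n (fun x => f x + c) ↔ q ∈ subgraph n f := by
    simp [subgraph]
  have harg : ((y, s + c) : E n × ℝ) - (q + ((0:E n), c)) = (y, s) - q := by
    have h0 : ((y, s + c) : E n × ℝ) = (y, s) + ((0:E n), c) := by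
      simp [Prod.ext_iff]
    rw [h0, add_sub_add_right_eq_sub]
  by_cases hq : q ∈ subgraph n f
  · rw [Set.indicator_of_mem (hmem.mpr hq), Set.indicator_of_mem hq, harg]
  · rw [Set.indicator_of_notMem (fun h => hq (hmem.mp h)), Set.indicator_of_notMem hq]

lemma heatEvol_strictAnti {n : ℕ} {t : ℝ} (ht : 0 < t) {g : E n → ℝ} (hg : Continuous g)
    (y : E n) {s s' : ℝ} (hss : s < s') :
    heatEvol n g (y, s') t < heatEvol n g (y, s) t := by
  set d := s' - s with hd_def
  have hd : 0 < d := sub_pos.mpr hss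
  have hshift : heatEvol n g (y, s') t = heatEvol n (fun x => g x - d) (y, s) t := by
    have h := heatEvol_shift (fun x => g x - d) (by continuity) d y s t
    simp only [sub_add_cancel] at h
    rw [show s + d = s' from by rw [hd_def]; ring] at h
    exact h
  rw [hshift]
  -- strict inequality between integrals over nested subgraphs
  set S1 := subgraph n g
  set S2 := subgraph n (fun x => g x - d)
  have hS1 : MeasurableSet S1 := subgraph_meas hg
  have hS2 : MeasurableSet S2 := subgraph_meas (by continuity)
  have hsub : S2 ⊆ S1 := fun q hq => le_trans hq (sub_le_self _ hd.le)
  have hint : IntegrableOn (fun q => heatKernel n ((y, s) - q) t) S1 :=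
    (heatKernel_integrable ht _).integrableOn
  have hdiff : heatEvol n g (y, s) t - heatEvol n (fun x => g x - d) (y, s) t
      = ∫ q in S1 \ S2, heatKernel n ((y, s) - q) t := by
    rw [integral_diff hS2 hint hsub]
    rfl
  have hpos : 0 < ∫ q in S1 \ S2, heatKernel n ((y, s) - q) t := by
    rw [setIntegral_pos_iff_support_of_nonneg_ae
      (Eventually.of_forall fun q => (heatKernel_pos ht _).le)
      (hint.mono_set Set.diff_subset)]
    have hsupp : Function.support (fun q : E n × ℝ => heatKernel n ((y, s) - q) t) = Set.univ :=
      Set.eq_univ_of_forall fun q => (heatKernel_pos ht _).ne'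
    rw [hsupp, Set.univ_inter]
    -- S1 \ S2 contains a product of an open set and an interval
    set A : Set (E n) := {x | |g x - g 0| < d / 4}
    set B : Set ℝ := Set.Ioc (g 0 - d / 2) (g 0 - d / 4)
    have hAB : A ×ˢ B ⊆ S1 \ S2 := by
      rintro ⟨x, r⟩ ⟨hx, hr⟩
      simp only [A, Set.mem_setOf_eq, abs_lt] at hx
      simp only [B, Set.mem_Ioc] at hr
      constructor
      · show r ≤ g x
        linarith
      · show ¬ r ≤ g x - d
        push_neg
        linarith
    refine lt_of_lt_of_le ?_ (measure_mono hAB)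
    rw [Measure.volume_eq_prod, Measure.prod_prod]
    have hA : 0 < volume A := by
      have hAopen : IsOpen A := by
        have : A = (fun x => |g x - g 0|) ⁻¹' Set.Iio (d / 4) := rfl
        rw [this]
        exact IsOpen.preimage (by continuity) isOpen_Iio
      exact hAopen.measure_pos volume ⟨0, by simp [A, hd]⟩
    have hB : 0 < volume B := by
      rw [Real.volume_Ioc]
      simp only [ENNReal.ofReal_pos]
      linarith
    exact ENNReal.mul_pos hA.ne' hB.ne'
  linarith [hdiff ▸ hpos]

/-- `H(t)` is a contraction in the sup norm:
`sup |H(t)f - H(t)g| ≤ sup |f - g|`. -/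
theorem stmt_4 (n : ℕ) (hn : 1 ≤ n) (t : ℝ) (ht : 0 < t)
    (f g Hf Hg : E n → ℝ) (hf : InB n f) (hg : InB n g)
    (hHf : ∀ y : E n, heatEvol n f (y, Hf y) t = 1 / 2)
    (hHg : ∀ y : E n, heatEvol n g (y, Hg y) t = 1 / 2) :
    ∀ x, |Hf x - Hg x| ≤ ⨆ y : E n, |f y - g y| := by
  intro x
  obtain ⟨⟨Mf, hMf⟩, hfc, -⟩ := hf
  obtain ⟨⟨Mg, hMg⟩, hgc, -⟩ := hg
  set M := ⨆ y : E n, |f y - g y| with hM_def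
  have hbdd : BddAbove (Set.range fun y : E n => |f y - g y|) := by
    refine ⟨Mf + Mg, ?_⟩
    rintro _ ⟨y, rfl⟩
    calc |f y - g y| ≤ |f y| + |g y| := abs_sub _ _
    _ ≤ Mf + Mg := add_le_add (hMf y) (hMg y)
  have hM : ∀ y, |f y - g y| ≤ M := fun y => le_ciSup hbdd y
  have key : ∀ (u v Hu Hv : E n → ℝ), Continuous u → Continuous v →
      heatEvol n u (x, Hu x) t = 1/2 → heatEvol n v (x, Hv x) t = 1/2 →
      (∀ y, v y ≤ u y + M) → Hv x ≤ Hu x + M := by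
    intro u v Hu Hv huc hvc hHu hHv hle
    by_contra hcon
    push_neg at hcon
    have h1 : heatEvol n v (x, Hv x) t < heatEvol n v (x, Hu x + M) t :=
      heatEvol_strictAnti ht hvc x hcon
    have h2 : heatEvol n v (x, Hu x + M) t ≤ heatEvol n (fun y => u y + M) (x, Hu x + M) t :=
      heatEvol_mono ht hle _
    have h3 : heatEvol n (fun y => u y + M) (x, Hu x + M) t = heatEvol n u (x, Hu x) t :=
      heatEvol_shift u huc M x (Hu x) t
    rw [hHv] at h1
    rw [h3, hHu] at h2
    linarith
  have hgf : ∀ y, g y ≤ f y + M := fun y => by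
    have := abs_le.mp (hM y); linarith [this.1]
  have hfg : ∀ y, f y ≤ g y + M := fun y => by
    have := abs_le.mp (hM y); linarith [this.2]
  have h1 := key f g Hf Hg hfc hgc (hHf x) (hHg x) hgf
  have h2 := key g f Hg Hf hgc hfc (hHg x) (hHf x) hfg
  rw [abs_sub_le_iff]
  constructor <;> linarith

end
end

section
/- Let n ≥ 1 and let B denote the set of bounded, continuous, ℤ^n-periodic functions ℝ^n → ℝ. Let J : (0, ∞) × B → B be a map such that for every λ > 0 and g ∈ B, the function J(λ, g) is a viscosity solution of v − λ Σ_{i,j=1}^n a_{ij}(∇v) ∂_i∂_j v = g. Fix f ∈ B and for each integer s ≥ 1 define u^s : ℝ^n × (0, ∞) → ℝ by u^s(x, t) = (J(1/s, ·))^k f (x) for t ∈ [k/s, (k+1)/s), k ∈ ℕ, where (J(1/s, ·))^k denotes the k-fold iterate. If u : ℝ^n × (0, ∞) → ℝ is continuous and u^s → u uniformly on ℝ^n × K for every compact K ⊂ (0, ∞) as s → ∞, then u is a viscosity solution of the graph mean curvature flow equation ∂_t u = Σ_{i,j=1}^n a_{ij}(∇u) ∂_i∂_j u on ℝ^n ×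 (0, ∞). -/
open MeasureTheory Real Filter

noncomputable section

variable {n : ℕ}

section Partial
variable (Φ : E n × ℝ → ℝ) (hΦ : ContDiff ℝ (⊤ : ℕ∞) Φ)
include hΦ

lemma hasFDerivAt_slice (x : E n) (τ : ℝ) :
    HasFDerivAt (fun y => Φ (y, τ))
      ((fderiv ℝ Φ (x, τ)).comp (ContinuousLinearMap.inl ℝ (E n) ℝ)) x :=
  ((hΦ.differentiable (by simp) (x, τ)).hasFDerivAt).comp x (hasFDerivAt_prodMk_left x τ)

lemma fderiv_slice (x : E n) (τ : ℝ) :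
    fderiv ℝ (fun y => Φ (y, τ)) x
      = (fderiv ℝ Φ (x, τ)).comp (ContinuousLinearMap.inl ℝ (E n) ℝ) :=
  (hasFDerivAt_slice Φ hΦ x τ).fderiv

lemma gradient_slice (x : E n) (τ : ℝ) :
    gradient (fun y => Φ (y, τ)) x
      = (InnerProductSpace.toDual ℝ (E n)).symm
          ((fderiv ℝ Φ (x, τ)).comp (ContinuousLinearMap.inl ℝ (E n) ℝ)) := by
  rw [gradient, fderiv_slice Φ hΦ]

lemma continuous_gradient_slice :
    Continuous (fun p : E n × ℝ => gradient (fun y => Φ (y, p.2)) p.1) := by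
  have h1 : Continuous (fun p : E n × ℝ => fderiv ℝ Φ p) :=
    (hΦ.fderiv_right (m := (⊤ : ℕ∞)) (by simp)).continuous
  have h2 : Continuous (fun p : E n × ℝ =>
      (fderiv ℝ Φ p).comp (ContinuousLinearMap.inl ℝ (E n) ℝ)) :=
    h1.clm_comp_const _
  have h3 := ((InnerProductSpace.toDual ℝ (E n)).symm.continuous).comp h2
  exact h3.congr fun p => (gradient_slice Φ hΦ p.1 p.2).symm
end Partial

section Partial2
variable (Φ : E n × ℝ → ℝ) (hΦ : ContDiff ℝ (⊤ : ℕ∞) Φ)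
include hΦ

lemma secondD_slice (x : E n) (τ : ℝ) (i j : Fin n) :
    secondD n (fun y => Φ (y, τ)) x i j
      = fderiv ℝ (fderiv ℝ Φ) (x, τ)
          (EuclideanSpace.single i 1, 0) (EuclideanSpace.single j 1, 0) := by
  have hD1 : ContDiff ℝ (⊤ : ℕ∞) (fderiv ℝ Φ) := hΦ.fderiv_right (m := (⊤ : ℕ∞)) (by simp)
  have hslice : (fun y : E n => fderiv ℝ (fun z => Φ (z, τ)) y (EuclideanSpace.single j 1))
      = fun y : E n => fderiv ℝ Φ (y, τ) ((EuclideanSpace.single j 1 : E n), (0:ℝ)) := by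
    funext y; rw [fderiv_slice Φ hΦ]; rfl
  have h2 : HasFDerivAt (fun y : E n => fderiv ℝ Φ (y, τ))
      ((fderiv ℝ (fderiv ℝ Φ) (x, τ)).comp (ContinuousLinearMap.inl ℝ (E n) ℝ)) x :=
    ((hD1.differentiable (by simp) (x, τ)).hasFDerivAt).comp x (hasFDerivAt_prodMk_left x τ)
  have h3 := h2.clm_apply
    (hasFDerivAt_const ((EuclideanSpace.single j 1 : E n), (0:ℝ)) x)
  rw [secondD, hslice, h3.fderiv]
  simp [ContinuousLinearMap.comp_apply]

lemma continuous_secondD_slice (i j : Fin n) :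
    Continuous (fun p : E n × ℝ => secondD n (fun y => Φ (y, p.2)) p.1 i j) := by
  have hD1 : ContDiff ℝ (⊤ : ℕ∞) (fderiv ℝ Φ) := hΦ.fderiv_right (m := (⊤ : ℕ∞)) (by simp)
  have hD2 : Continuous (fderiv ℝ (fderiv ℝ Φ)) := (hD1.fderiv_right (m := (⊤ : ℕ∞)) (by simp)).continuous
  have h : Continuous (fun p : E n × ℝ =>
      fderiv ℝ (fderiv ℝ Φ) p (EuclideanSpace.single i 1, 0) (EuclideanSpace.single j 1, 0)) :=
    (hD2.clm_apply continuous_const).clm_apply continuous_const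
  refine h.congr fun p => ?_
  rw [secondD_slice Φ hΦ]
end Partial2

section TimeSlice
variable (Φ : E n × ℝ → ℝ) (hΦ : ContDiff ℝ (⊤ : ℕ∞) Φ)
include hΦ

lemma hasDerivAt_slice_t (x : E n) (τ : ℝ) :
    HasDerivAt (fun s => Φ (x, s)) (fderiv ℝ Φ (x, τ) (0, 1)) τ := by
  have h := (hΦ.differentiable (by simp) (x, τ)).hasFDerivAt
  exact h.comp_hasDerivAt τ ((hasDerivAt_const τ x).prodMk (hasDerivAt_id τ))

lemma continuous_timeD :
    Continuous (fun p : E n × ℝ => fderiv ℝ Φ p ((0 : E n), (1 : ℝ))) :=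
  ((hΦ.fderiv_right (m := (⊤ : ℕ∞)) (by simp)).continuous).clm_apply continuous_const
end TimeSlice

lemma continuous_aMat (i j : Fin n) : Continuous (fun p : E n => aMat n p i j) := by
  have hcoord : ∀ k : Fin n, Continuous (fun p : E n => p k) := fun k =>
    (EuclideanSpace.proj k : E n →L[ℝ] ℝ).continuous
  have hden : Continuous (fun p : E n => 1 + ‖p‖ ^ 2) :=
    continuous_const.add (continuous_norm.pow 2)
  have hne : ∀ p : E n, 1 + ‖p‖ ^ 2 ≠ 0 := fun p => by positivity
  exact continuous_const.sub (((hcoord i).mul (hcoord j)).div hden hne)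

section Quad
set_option synthInstance.maxHeartbeats 1000000
set_option maxHeartbeats 1000000
variable (g : E n → ℝ) (hg : ContDiff ℝ (⊤ : ℕ∞) g) (x₀ : E n) (ε c : ℝ)

lemma hasFDerivAt_quad (x : E n) :
    HasFDerivAt (fun y : E n => ε * (‖y - x₀‖ ^ 2 + c))
      (ε • (2 • (innerSL ℝ (x - x₀)).comp (ContinuousLinearMap.id ℝ (E n)))) x := by
  have h1 : HasFDerivAt (fun y : E n => y - x₀) (ContinuousLinearMap.id ℝ (E n)) x :=
    (hasFDerivAt_id x).sub_const x₀
  have h2 := h1.norm_sq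
  exact (h2.add_const c).const_mul ε

include hg

lemma gradient_quad_add :
    gradient (fun y => g y + ε * (‖y - x₀‖ ^ 2 + c)) x₀ = gradient g x₀ := by
  have h1 := (hg.differentiable (by simp) x₀).hasFDerivAt
  have h2 := h1.fun_add (hasFDerivAt_quad x₀ ε c x₀)
  have h3 : fderiv ℝ (fun y => g y + ε * (‖y - x₀‖ ^ 2 + c)) x₀ = fderiv ℝ g x₀ := by
    rw [h2.fderiv, sub_self, map_zero, ContinuousLinearMap.zero_comp, smul_zero,
      smul_zero, add_zero]
  rw [gradient, gradient, h3]

lemma secondD_quad_add (i j : Fin n) :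
    secondD n (fun y => g y + ε * (‖y - x₀‖ ^ 2 + c)) x₀ i j
      = secondD n g x₀ i j + ε * (if i = j then 2 else 0) := by
  set ej : E n := EuclideanSpace.single j 1 with hej
  set ei : E n := EuclideanSpace.single i 1 with hei
  have hfun : (fun y : E n => fderiv ℝ (fun z => g z + ε * (‖z - x₀‖ ^ 2 + c)) y ej)
      = fun y : E n => fderiv ℝ g y ej + (ε * 2) * (innerSL ℝ ej (y - x₀)) := by
    funext y
    have h1 := (hg.differentiable (by simp) y).hasFDerivAt
    have h2 := h1.fun_add (hasFDerivAt_quad x₀ ε c y)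
    rw [h2.fderiv, ContinuousLinearMap.add_apply]
    congr 1
    simp only [ContinuousLinearMap.smul_apply, ContinuousLinearMap.coe_smul',
      Pi.smul_apply, ContinuousLinearMap.coe_comp', Function.comp_apply,
      ContinuousLinearMap.coe_id', id_eq, innerSL_apply_apply, smul_eq_mul]
    rw [real_inner_comm]
    ring
  have T1 : DifferentiableAt ℝ (fun y : E n => fderiv ℝ g y ej) x₀ :=
    ((hg.fderiv_right (m := (⊤ : ℕ∞)) (by simp)).differentiable (by simp) x₀).clm_apply
      (differentiableAt_const _)
  have T2 : HasFDerivAt (fun y : E n => (ε * 2) * (innerSL ℝ ej (y - x₀)))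
      ((ε * 2) • ((innerSL ℝ ej).comp (ContinuousLinearMap.id ℝ (E n)))) x₀ := by
    have h0 : HasFDerivAt (fun y : E n => y - x₀) (ContinuousLinearMap.id ℝ (E n)) x₀ :=
      (hasFDerivAt_id x₀).sub_const x₀
    exact ((innerSL ℝ ej).hasFDerivAt.comp x₀ h0).const_mul (ε * 2)
  have hsum := (T1.hasFDerivAt.fun_add T2)
  have hip : (inner (𝕜 := ℝ) ej ei : ℝ) = if i = j then 1 else 0 := by
    rw [hej, hei, EuclideanSpace.inner_single_left]
    simp only [map_one, one_mul, EuclideanSpace.single_apply]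
    rcases eq_or_ne i j with h | h
    · simp [h]
    · simp [h, Ne.symm h]
  have h2 : ((ε * 2) • ((innerSL ℝ ej).comp (ContinuousLinearMap.id ℝ (E n)))) ei
      = ε * (if i = j then 2 else 0) := by
    simp only [ContinuousLinearMap.smul_apply, ContinuousLinearMap.coe_smul',
      Pi.smul_apply, ContinuousLinearMap.coe_comp', Function.comp_apply,
      ContinuousLinearMap.coe_id', id_eq, innerSL_apply_apply, smul_eq_mul, hip]
    rcases eq_or_ne i j with h | h <;> simp [h] <;> try ring
  rw [secondD, hfun, hsum.fderiv, ContinuousLinearMap.add_apply, h2]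
  rfl
end Quad

lemma exists_max_of_coercive (h : E n → ℝ) (hc : Continuous h) (C ε : ℝ) (hε : 0 < ε)
    (x₀ : E n) (hb : ∀ y, h y ≤ C - ε * ‖y - x₀‖ ^ 2) : ∃ z, ∀ y, h y ≤ h z := by
  obtain ⟨R, hR⟩ : ∃ R : ℝ, R = Real.sqrt ((C - h x₀) / ε) + 1 := ⟨_, rfl⟩
  have hR0 : 0 < R := by
    have := Real.sqrt_nonneg ((C - h x₀) / ε); linarith
  obtain ⟨z, _, hz⟩ := (isCompact_closedBall x₀ R).exists_isMaxOn
    (Metric.nonempty_closedBall.2 hR0.le)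
    (hc.continuousOn)
  refine ⟨z, fun y => ?_⟩
  rcases le_or_gt (dist y x₀) R with hy | hy
  · exact hz (Metric.mem_closedBall.2 hy)
  · have hx₀z : h x₀ ≤ h z := hz (Metric.mem_closedBall.2 (by simp [hR0.le]))
    have h1 : C - h x₀ ≤ ε * R ^ 2 := by
      have h2 : Real.sqrt ((C - h x₀) / ε) ^ 2 ≤ R ^ 2 := by
        have := Real.sqrt_nonneg ((C - h x₀) / ε)
        nlinarith
      rcases le_or_gt (C - h x₀) 0 with h3 | h3
      · nlinarith
      · have h4 : Real.sqrt ((C - h x₀) / ε) ^ 2 = (C - h x₀) / ε :=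
          Real.sq_sqrt (by positivity)
        rw [h4] at h2
        calc C - h x₀ = ε * ((C - h x₀) / ε) := by field_simp
          _ ≤ ε * R ^ 2 := by nlinarith
    have h5 : ‖y - x₀‖ ^ 2 > R ^ 2 := by
      have : ‖y - x₀‖ = dist y x₀ := by rw [dist_eq_norm]
      nlinarith [dist_nonneg (x := y) (y := x₀)]
    have := hb y
    nlinarith

set_option maxHeartbeats 2000000 in
lemma subHalf (n : ℕ)
    (J : ℝ → (E n → ℝ) → (E n → ℝ))
    (hJ : ∀ lam : ℝ, 0 < lam → ∀ g : E n → ℝ, InB n g →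
      InB n (J lam g) ∧ IsViscosityResolvent n lam g (J lam g))
    (f : E n → ℝ) (hf : InB n f)
    (u : E n → ℝ → ℝ)
    (hucont : ContinuousOn (fun p : E n × ℝ => u p.1 p.2) {p : E n × ℝ | 0 < p.2})
    (hconv : ∀ K : Set ℝ, IsCompact K → K ⊆ Set.Ioi (0 : ℝ) →
      TendstoUniformlyOn
        (fun (s : ℕ) (p : E n × ℝ) => (J (1 / (s : ℝ)))^[⌊p.2 * (s : ℝ)⌋₊] f p.1)
        (fun p : E n × ℝ => u p.1 p.2) atTop (Set.univ ×ˢ K))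
    (x₀ : E n) (t₀ : ℝ) (ht : 0 < t₀) (φ : E n → ℝ → ℝ)
    (hφ : ContDiff ℝ (⊤ : ℕ∞) (fun p : E n × ℝ => φ p.1 p.2))
    (hmax : ∀ y s, 0 < s → u y s - φ y s ≤ u x₀ t₀ - φ x₀ t₀) :
    deriv (φ x₀) t₀ ≤
      ∑ i, ∑ j, aMat n (gradient (fun y => φ y t₀) x₀) i j
        * secondD n (fun y => φ y t₀) x₀ i j := by
  set p₀ : E n := gradient (fun y => φ y t₀) x₀ with hp₀
  set F₀ : ℝ := ∑ i, ∑ j, aMat n p₀ i j * secondD n (fun y => φ y t₀) x₀ i j with hF₀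
  set TrA : ℝ := ∑ i, aMat n p₀ i i with hTrA
  -- Step 1: reduce to a perturbed inequality for every ε > 0.
  suffices key : ∀ ε : ℝ, 0 < ε → deriv (φ x₀) t₀ ≤ F₀ + ε * (2 * TrA) by
    refine le_of_forall_pos_le_add fun ρ hρ => ?_
    have hε : 0 < ρ / (2 * |2 * TrA| + 2) := by positivity
    have h1 := key _ hε
    have h2 : (ρ / (2 * |2 * TrA| + 2)) * (2 * TrA) ≤ ρ := by
      have ha : 2 * TrA ≤ |2 * TrA| := le_abs_self _
      have hb : 0 ≤ |2 * TrA| := abs_nonneg _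
      rw [div_mul_eq_mul_div, div_le_iff₀ (by positivity)]
      nlinarith only [ha, hb, hρ]
    linarith only [h1, h2]
  intro ε hε
  refine le_of_forall_pos_le_add fun ρ' hρ' => ?_
  -- The perturbed test function on space-time.
  set Φ : E n × ℝ → ℝ := fun p => φ p.1 p.2 with hΦdef
  have hΦ : ContDiff ℝ (⊤ : ℕ∞) Φ := hφ
  set Ψ : E n × ℝ → ℝ :=
    fun p => φ p.1 p.2 + ε * (‖p.1 - x₀‖ ^ 2 + (p.2 - t₀) ^ 2) with hΨdef
  have hΨ : ContDiff ℝ (⊤ : ℕ∞) Ψ := by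
    refine hφ.add (contDiff_const.mul ?_)
    exact ((contDiff_fst.sub contDiff_const).norm_sq (𝕜 := ℝ)).add
      ((contDiff_snd.sub contDiff_const).pow 2)
  set G : E n × ℝ → ℝ := fun p => ∑ i, ∑ j,
    aMat n (gradient (fun y => Ψ (y, p.2)) p.1) i j
      * secondD n (fun y => Ψ (y, p.2)) p.1 i j with hGdef
  set T : E n × ℝ → ℝ := fun p => fderiv ℝ Ψ p ((0 : E n), (1 : ℝ)) with hTdef
  have hGcont : Continuous G := by
    refine continuous_finset_sum _ fun i _ => continuous_finset_sum _ fun j _ => ?_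
    exact ((continuous_aMat i j).comp (continuous_gradient_slice Ψ hΨ)).mul
      (continuous_secondD_slice Ψ hΨ i j)
  have hTcont : Continuous T := continuous_timeD Ψ hΨ
  have hφt : ContDiff ℝ (⊤ : ℕ∞) (fun y => φ y t₀) :=
    hφ.comp (contDiff_id.prodMk contDiff_const)
  -- Value of G at the base point.
  have hG0 : G (x₀, t₀) = F₀ + ε * (2 * TrA) := by
    have hgr : gradient (fun y => Ψ (y, t₀)) x₀ = p₀ :=
      gradient_quad_add (fun y => φ y t₀) hφt x₀ ε ((t₀ - t₀) ^ 2)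
    have hsec : ∀ i j : Fin n, secondD n (fun y => Ψ (y, t₀)) x₀ i j
        = secondD n (fun y => φ y t₀) x₀ i j + ε * (if i = j then 2 else 0) := fun i j =>
      secondD_quad_add (fun y => φ y t₀) hφt x₀ ε ((t₀ - t₀) ^ 2) i j
    have : G (x₀, t₀) = ∑ i, ∑ j, aMat n p₀ i j *
        (secondD n (fun y => φ y t₀) x₀ i j + ε * (if i = j then 2 else 0)) := by
      rw [hGdef]
      exact Finset.sum_congr rfl fun i _ => Finset.sum_congr rfl fun j _ => by
        rw [hgr, hsec]
    rw [this, hF₀, hTrA]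
    have hper : ∀ i : Fin n, ∑ j, aMat n p₀ i j *
        (secondD n (fun y => φ y t₀) x₀ i j + ε * (if i = j then 2 else 0))
        = (∑ j, aMat n p₀ i j * secondD n (fun y => φ y t₀) x₀ i j)
          + ε * (2 * aMat n p₀ i i) := by
      intro i
      rw [show (∑ j, aMat n p₀ i j *
          (secondD n (fun y => φ y t₀) x₀ i j + ε * (if i = j then 2 else 0)))
          = ∑ j, (aMat n p₀ i j * secondD n (fun y => φ y t₀) x₀ i j
            + aMat n p₀ i j * (ε * (if i = j then 2 else 0))) from
        Finset.sum_congr rfl fun j _ => by ring]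
      rw [Finset.sum_add_distrib]
      congr 1
      rw [Finset.sum_eq_single i]
      · simp; ring
      · intro j _ hji
        simp [Ne.symm hji]
      · intro h; exact absurd (Finset.mem_univ i) h
    calc ∑ i, ∑ j, aMat n p₀ i j *
          (secondD n (fun y => φ y t₀) x₀ i j + ε * (if i = j then 2 else 0))
        = ∑ i, ((∑ j, aMat n p₀ i j * secondD n (fun y => φ y t₀) x₀ i j)
            + ε * (2 * aMat n p₀ i i)) := Finset.sum_congr rfl fun i _ => hper i
      _ = (∑ i, ∑ j, aMat n p₀ i j * secondD n (fun y => φ y t₀) x₀ i j)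
            + ε * (2 * ∑ i, aMat n p₀ i i) := by
          rw [Finset.sum_add_distrib, ← Finset.mul_sum, ← Finset.mul_sum]
  -- Value of T at the base point.
  have hT0 : T (x₀, t₀) = deriv (φ x₀) t₀ := by
    have hA := hasDerivAt_slice_t Ψ hΨ x₀ t₀
    have h1 : HasDerivAt (fun s => φ x₀ s) (deriv (φ x₀) t₀) t₀ :=
      (hasDerivAt_slice_t Φ hΦ x₀ t₀).differentiableAt.hasDerivAt
    have h2 : HasDerivAt (fun s : ℝ => ε * (‖x₀ - x₀‖ ^ 2 + (s - t₀) ^ 2))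
        (ε * (2 * (t₀ - t₀) ^ 1 * 1)) t₀ :=
      ((((hasDerivAt_id t₀).sub_const t₀).pow 2).const_add (‖x₀ - x₀‖ ^ 2)).const_mul ε
    have hB : HasDerivAt (fun s : ℝ => Ψ (x₀, s))
        (deriv (φ x₀) t₀ + ε * (2 * (t₀ - t₀) ^ 1 * 1)) t₀ := h1.add h2
    have := hA.unique hB
    rw [hTdef]
    simp only [this]
    simp
  -- Choose the continuity radius r.
  have hρ'2 : 0 < ρ' / 2 := by positivity
  obtain ⟨r1, hr1, hGr⟩ := Metric.continuousAt_iff.1 (hGcont.continuousAt (x := (x₀, t₀))) _ hρ'2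
  obtain ⟨r2, hr2, hTr⟩ := Metric.continuousAt_iff.1 (hTcont.continuousAt (x := (x₀, t₀))) _ hρ'2
  set r : ℝ := min (min r1 r2) (t₀ / 4) with hrdef
  have hr : 0 < r := lt_min (lt_min hr1 hr2) (by positivity)
  have hrt : r ≤ t₀ / 4 := min_le_right _ _
  -- the uniform-closeness tolerance
  set η : ℝ := ε * r ^ 2 / 16 with hηdef
  have hη : 0 < η := by positivity
  set m' : ℝ := u x₀ t₀ - φ x₀ t₀ with hm'
  -- continuity of τ ↦ u x₀ τ - Ψ (x₀, τ) at t₀.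
  set W : ℝ → ℝ := fun τ => u x₀ τ - Ψ (x₀, τ) with hWdef
  have hW0 : W t₀ = m' := by
    simp [hWdef, hΨdef, hm']
  have hWc : ContinuousAt W t₀ := by
    have hu_at : ContinuousAt (fun p : E n × ℝ => u p.1 p.2) (x₀, t₀) :=
      hucont.continuousAt ((isOpen_lt continuous_const continuous_snd).mem_nhds ht)
    have hmk : Continuous (fun τ : ℝ => ((x₀ : E n), τ)) :=
      continuous_const.prodMk continuous_id
    exact (hu_at.comp hmk.continuousAt).sub (hΨ.continuous.comp hmk).continuousAt
  obtain ⟨d, hd, hWd⟩ := Metric.continuousAt_iff.1 hWc _ hη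
  -- collect the eventual conditions and pick one large s.
  have hIccK : Set.Icc (t₀ / 2) (t₀ + 1) ⊆ Set.Ioi (0 : ℝ) := fun τ hτ =>
    lt_of_lt_of_le (by linarith : (0:ℝ) < t₀ / 2) hτ.1
  have Ev1 := (Metric.tendstoUniformlyOn_iff.1
    (hconv (Set.Icc (t₀ / 2) (t₀ + 1)) isCompact_Icc hIccK)) η hη
  set M : ℝ := max (max (8 / t₀) (2 / r + 1)) (max (1 / d + 1) 1) with hMdef
  have EvM : ∀ᶠ s : ℕ in atTop, M ≤ (s : ℝ) :=
    (tendsto_natCast_atTop_atTop (R := ℝ)).eventually_ge_atTop M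
  obtain ⟨s, hs1, hsM⟩ := (Ev1.and EvM).exists
  -- basic facts about s
  have hsM1 : (8 / t₀ : ℝ) ≤ s := le_trans (le_max_of_le_left (le_max_left _ _)) hsM
  have hsM2 : (2 / r + 1 : ℝ) ≤ s := le_trans (le_max_of_le_left (le_max_right _ _)) hsM
  have hsM3 : (1 / d + 1 : ℝ) ≤ s := le_trans (le_max_of_le_right (le_max_left _ _)) hsM
  have hsM4 : (1 : ℝ) ≤ s := le_trans (le_max_of_le_right (le_max_right _ _)) hsM
  have hspos : (0 : ℝ) < s := by linarith only [hsM4]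
  have hsne : (s : ℝ) ≠ 0 := ne_of_gt hspos
  have hlam : (0 : ℝ) < 1 / s := by positivity
  have hinvr : 1 / (s : ℝ) < r / 2 := by
    rw [div_lt_iff₀ hspos]
    have h2r : 0 < 2 / r := by positivity
    calc (1:ℝ) = (r / 2) * (2 / r) := by field_simp
      _ < (r / 2) * s := by
        apply mul_lt_mul_of_pos_left _ (by positivity)
        linarith only [hsM2]
  have hinvd : 1 / (s : ℝ) < d := by
    rw [div_lt_iff₀ hspos]
    have : 0 < 1 / d := by positivity
    calc (1:ℝ) = d * (1 / d) := by field_simp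
      _ < d * s := by
        apply mul_lt_mul_of_pos_left _ hd
        linarith only [hsM3]
  -- the iterates
  set v : ℕ → E n → ℝ := fun k => (J (1 / (s : ℝ)))^[k] f with hvdef
  have hvB : ∀ k, InB n (v k) := by
    intro k
    induction k with
    | zero => exact hf
    | succ k ih =>
      have : v (k + 1) = J (1 / (s : ℝ)) (v k) := Function.iterate_succ_apply' _ _ _
      rw [this]
      exact (hJ _ hlam _ ih).1
  have hclose : ∀ k : ℕ, (k : ℝ) / s ∈ Set.Icc (t₀ / 2) (t₀ + 1) →
      ∀ y, dist (u y ((k : ℝ) / s)) (v k y) < η := by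
    intro k hk y
    have hmem : ((y, (k : ℝ) / s) : E n × ℝ) ∈ Set.univ ×ˢ Set.Icc (t₀ / 2) (t₀ + 1) :=
      Set.mem_prod.2 ⟨Set.mem_univ _, hk⟩
    have := hs1 (y, (k : ℝ) / s) hmem
    have he : ((k : ℝ) / s) * s = (k : ℝ) := div_mul_cancel₀ _ hsne
    simpa [he, Nat.floor_natCast, hvdef] using this
  -- the time index window
  set ka : ℕ := ⌈(t₀ / 2) * (s : ℝ)⌉₊ with hkadef
  set kb : ℕ := ⌊(t₀ + 1) * (s : ℝ)⌋₊ with hkbdef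
  set Ks : Finset ℕ := Finset.Icc ka kb with hKsdef
  have hkτ : ∀ k ∈ Ks, (k : ℝ) / s ∈ Set.Icc (t₀ / 2) (t₀ + 1) := by
    intro k hk
    rw [hKsdef, Finset.mem_Icc] at hk
    constructor
    · rw [le_div_iff₀ hspos]
      calc (t₀ / 2) * s ≤ (ka : ℝ) := Nat.le_ceil _
        _ ≤ (k : ℝ) := Nat.cast_le.2 hk.1
    · rw [div_le_iff₀ hspos]
      calc (k : ℝ) ≤ (kb : ℝ) := Nat.cast_le.2 hk.2
        _ ≤ (t₀ + 1) * s := Nat.floor_le (by positivity)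
  have hτpos : ∀ k ∈ Ks, (0 : ℝ) < (k : ℝ) / s := fun k hk =>
    lt_of_lt_of_le (by linarith only [ht] : (0:ℝ) < t₀ / 2) (hkτ k hk).1
  -- coercivity bound and maximizers
  have hcoer : ∀ k ∈ Ks, ∀ y, v k y - Ψ (y, (k : ℝ) / s)
      ≤ (m' + η) - ε * ‖y - x₀‖ ^ 2 := by
    intro k hk y
    have h1 : v k y < u y ((k : ℝ) / s) + η := by
      have := hclose k (hkτ k hk) y
      rw [Real.dist_eq, abs_sub_lt_iff] at this
      linarith only [this.1, this.2]
    have h2 : u y ((k : ℝ) / s) - φ y ((k : ℝ) / s) ≤ m' := hmax y _ (hτpos k hk)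
    have h3 : Ψ (y, (k : ℝ) / s)
        = φ y ((k : ℝ) / s) + ε * ‖y - x₀‖ ^ 2 + ε * ((k : ℝ) / s - t₀) ^ 2 := by
      show φ y ((k : ℝ) / s) + ε * (‖y - x₀‖ ^ 2 + ((k : ℝ) / s - t₀) ^ 2) = _
      ring
    have h5 : 0 ≤ ε * ((k : ℝ) / s - t₀) ^ 2 := mul_nonneg hε.le (sq_nonneg _)
    linarith only [h1, h2, h3, h5]
  have hzz : ∀ k : ℕ, ∃ z : E n, k ∈ Ks →
      ∀ y, v k y - Ψ (y, (k : ℝ) / s) ≤ v k z - Ψ (z, (k : ℝ) / s) := by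
    intro k
    by_cases hk : k ∈ Ks
    · have hc : Continuous fun y => v k y - Ψ (y, (k : ℝ) / s) :=
        (hvB k).2.1.sub (hΨ.continuous.comp (continuous_id.prodMk continuous_const))
      obtain ⟨z, hz⟩ := exists_max_of_coercive _ hc (m' + η) ε hε x₀ (hcoer k hk)
      exact ⟨z, fun _ => hz⟩
    · exact ⟨x₀, fun h => absurd h hk⟩
  choose z hz using hzz
  -- the reference index
  set k₀ : ℕ := ⌊t₀ * (s : ℝ)⌋₊ with hk₀def
  have hk₀ : k₀ ∈ Ks := by
    rw [hKsdef, Finset.mem_Icc]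
    constructor
    · have h1 : (ka : ℝ) < (t₀ / 2) * s + 1 := Nat.ceil_lt_add_one (by positivity)
      have h2 : t₀ * s - 1 < (k₀ : ℝ) := Nat.sub_one_lt_floor _
      have h3 : (8 : ℝ) ≤ t₀ * s := by
        rw [div_le_iff₀ ht] at hsM1
        linarith only [hsM1, show (s:ℝ) * t₀ = t₀ * s from mul_comm _ _]
      have : (ka : ℝ) < (k₀ : ℝ) := by
        linarith only [h1, h2, h3, show (t₀ / 2) * (s:ℝ) = (t₀ * s) / 2 from by ring]
      exact le_of_lt (Nat.cast_lt.1 this)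
    · apply Nat.le_floor
      calc ((k₀ : ℕ) : ℝ) ≤ t₀ * s := Nat.floor_le (by positivity)
        _ ≤ (t₀ + 1) * s := by
          linarith only [hspos, show (t₀ + 1) * (s:ℝ) = t₀ * s + s from by ring]
  obtain ⟨ks, hksmem, hksmax⟩ := Finset.exists_max_image Ks
    (fun k => v k (z k) - Ψ (z k, (k : ℝ) / s)) ⟨k₀, hk₀⟩
  set xs : E n := z ks with hxsdef
  set τs : ℝ := (ks : ℝ) / s with hτsdef
  have Hmax2 : ∀ k ∈ Ks, ∀ y, v k y - Ψ (y, (k : ℝ) / s) ≤ v ks xs - Ψ (xs, τs) :=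
    fun k hk y => le_trans (hz k hk y) (hksmax k hk)
  -- location estimate
  set τ₀s : ℝ := (k₀ : ℝ) / s with hτ₀sdef
  have hτ₀1 : τ₀s ≤ t₀ := by
    rw [hτ₀sdef, div_le_iff₀ hspos]
    exact Nat.floor_le (by positivity)
  have hτ₀2 : t₀ - 1 / s < τ₀s := by
    rw [hτ₀sdef]
    have h2 : t₀ * s - 1 < (k₀ : ℝ) := Nat.sub_one_lt_floor _
    rw [sub_lt_iff_lt_add, ← add_div]
    rw [lt_div_iff₀ hspos]
    linarith only [h2]
  have hWτ₀ : m' - η < W τ₀s := by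
    have : dist τ₀s t₀ < d := by
      rw [Real.dist_eq, abs_lt]
      exact ⟨by linarith only [hτ₀2, hinvd], by linarith only [hτ₀1, hd]⟩
    have := hWd this
    rw [Real.dist_eq, abs_sub_lt_iff, hW0] at this
    linarith only [this.2]
  have hVlow : m' - 2 * η < v ks xs - Ψ (xs, τs) := by
    have h1 := Hmax2 k₀ hk₀ x₀
    have h2 : dist (u x₀ τ₀s) (v k₀ x₀) < η := hclose k₀ (hkτ k₀ hk₀) x₀
    rw [Real.dist_eq, abs_sub_lt_iff] at h2
    have h3 : W τ₀s = u x₀ τ₀s - Ψ (x₀, τ₀s) := rfl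
    have : (τ₀s = (k₀ : ℝ) / s) := rfl
    rw [← this] at h1
    linarith only [h1, h2.1, h2.2, hWτ₀, h3]
  have hτspos : 0 < τs := hτpos ks hksmem
  have hVup : v ks xs - Ψ (xs, τs)
      ≤ m' + η - ε * (‖xs - x₀‖ ^ 2 + (τs - t₀) ^ 2) := by
    have h2 : dist (u xs τs) (v ks xs) < η := hclose ks (hkτ ks hksmem) xs
    rw [Real.dist_eq, abs_sub_lt_iff] at h2
    have h3 : u xs τs - φ xs τs ≤ m' := hmax xs τs hτspos
    have h4 : Ψ (xs, τs) = φ xs τs + ε * (‖xs - x₀‖ ^ 2 + (τs - t₀) ^ 2) := rfl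
    linarith only [h2.1, h2.2, h3, h4]
  have hloc : ε * (‖xs - x₀‖ ^ 2 + (τs - t₀) ^ 2) < 3 * η := by
    linarith only [hVlow, hVup]
  have hrr : 0 < ε * r ^ 2 := by positivity
  have hsplit : ε * (‖xs - x₀‖ ^ 2 + (τs - t₀) ^ 2)
      = ε * ‖xs - x₀‖ ^ 2 + ε * (τs - t₀) ^ 2 := by ring
  have hquarter : ε * (r / 2) ^ 2 = ε * r ^ 2 / 4 := by ring
  have hxs : ‖xs - x₀‖ < r / 2 := by
    by_contra hcon
    push_neg at hcon
    have h1 : (r / 2) ^ 2 ≤ ‖xs - x₀‖ ^ 2 := pow_le_pow_left₀ (by positivity) hcon 2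
    have h2 : ε * (r / 2) ^ 2 ≤ ε * ‖xs - x₀‖ ^ 2 := mul_le_mul_of_nonneg_left h1 hε.le
    have h3 : 0 ≤ ε * (τs - t₀) ^ 2 := mul_nonneg hε.le (sq_nonneg _)
    linarith only [hloc, hηdef, hsplit, h2, h3, hquarter, hrr]
  have hτs : |τs - t₀| < r / 2 := by
    by_contra hcon
    push_neg at hcon
    have h0 : |τs - t₀| ^ 2 = (τs - t₀) ^ 2 := sq_abs _
    have h1 : (r / 2) ^ 2 ≤ (τs - t₀) ^ 2 := by
      rw [← h0]; exact pow_le_pow_left₀ (by positivity) hcon 2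
    have h2 : ε * (r / 2) ^ 2 ≤ ε * (τs - t₀) ^ 2 := mul_le_mul_of_nonneg_left h1 hε.le
    have h3 : 0 ≤ ε * ‖xs - x₀‖ ^ 2 := mul_nonneg hε.le (sq_nonneg _)
    linarith only [hloc, hηdef, hsplit, h2, h3, hquarter, hrr]
  -- the index ks - 1 is still in the window
  have hkscast : (ks : ℝ) = τs * s := by
    rw [hτsdef, div_mul_cancel₀ _ hsne]
  have hka1 : ka + 1 ≤ ks := by
    have h1 : (ka : ℝ) < (t₀ / 2) * s + 1 := Nat.ceil_lt_add_one (by positivity)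
    have h3 : (8 : ℝ) ≤ t₀ * s := by
      rw [div_le_iff₀ ht] at hsM1
      linarith only [hsM1, show (s:ℝ) * t₀ = t₀ * s from mul_comm _ _]
    have h4 : t₀ - r / 2 < τs := by
      have := abs_lt.1 hτs; linarith only [this.1]
    have h5 : r ≤ t₀ / 4 := hrt
    have h6 : (t₀ / 2) * s + 2 ≤ (3 / 4 * t₀) * s := by
      linarith only [h3,
        show (3 / 4 * t₀) * (s:ℝ) - (t₀ / 2) * (s:ℝ) = (t₀ * s) / 4 from by ring]
    have h7 : (3 / 4 * t₀) * s ≤ τs * s := by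
      refine mul_le_mul_of_nonneg_right ?_ hspos.le
      linarith only [h4, h5, ht]
    have h8 : (ka : ℝ) + 1 < (ks : ℝ) := by
      rw [hkscast]; linarith only [h1, h6, h7]
    have h9 : ((ka + 1 : ℕ) : ℝ) < (ks : ℝ) := by push_cast; linarith only [h8]
    exact le_of_lt (Nat.cast_lt.1 h9)
  have hks1 : 1 ≤ ks := le_trans (Nat.le_add_left 1 ka) hka1
  have hk'mem : ks - 1 ∈ Ks := by
    rw [hKsdef, Finset.mem_Icc]
    rw [hKsdef, Finset.mem_Icc] at hksmem
    omega
  -- the resolvent inequality at the maximum point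
  have hiter : v ks = J (1 / (s : ℝ)) (v (ks - 1)) := by
    conv_lhs => rw [hvdef]
    rw [show ks = (ks - 1) + 1 from (Nat.succ_pred_eq_of_pos hks1).symm]
    exact Function.iterate_succ_apply' _ _ _
  have hres : IsViscosityResolvent n (1 / (s : ℝ)) (v (ks - 1)) (v ks) := by
    rw [hiter]
    exact (hJ _ hlam _ (hvB (ks - 1))).2
  have hφt2 : ContDiff ℝ (⊤ : ℕ∞) (fun y => Ψ (y, τs)) :=
    hΨ.comp (contDiff_id.prodMk contDiff_const)
  have hmx : ∀ y, v ks y - Ψ (y, τs) ≤ v ks xs - Ψ (xs, τs) := fun y =>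
    Hmax2 ks hksmem y
  have hA := hres.2.1 xs (fun y => Ψ (y, τs)) hφt2 hmx
  have hGxs : ∑ i, ∑ j, aMat n (gradient (fun y => Ψ (y, τs)) xs) i j
      * secondD n (fun y => Ψ (y, τs)) xs i j = G (xs, τs) := rfl
  rw [hGxs] at hA
  -- comparing with the previous time step
  have hcast2 : ((ks - 1 : ℕ) : ℝ) / s = τs - 1 / s := by
    rw [Nat.cast_pred hks1, sub_div, hτsdef]
  have hB := Hmax2 (ks - 1) hk'mem xs
  rw [hcast2] at hB
  have hcomb : Ψ (xs, τs) - Ψ (xs, τs - 1 / s) ≤ (1 / s) * G (xs, τs) := by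
    linarith only [hA, hB]
  -- mean value theorem in time
  have hab : τs - 1 / s < τs := by linarith only [hlam]
  have hcontI : ContinuousOn (fun τ => Ψ (xs, τ)) (Set.Icc (τs - 1 / s) τs) :=
    (hΨ.continuous.comp (continuous_const.prodMk continuous_id)).continuousOn
  have hderivI : ∀ τ ∈ Set.Ioo (τs - 1 / s) τs,
      HasDerivAt (fun τ => Ψ (xs, τ)) (T (xs, τ)) τ := fun τ _ =>
    hasDerivAt_slice_t Ψ hΨ xs τ
  obtain ⟨θ, hθmem, hθeq⟩ := exists_hasDerivAt_eq_slope
    (fun τ => Ψ (xs, τ)) (fun τ => T (xs, τ)) hab hcontI hderivI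
  have hTθ : T (xs, θ) ≤ G (xs, τs) := by
    rw [hθeq]
    rw [show τs - (τs - 1 / s) = 1 / s by ring]
    rw [div_le_iff₀ hlam]
    linarith only [hcomb]
  -- final continuity comparison
  have hdistτ : dist (xs, θ) (x₀, t₀) < r := by
    rw [Prod.dist_eq]
    have h1 : dist xs x₀ < r := by
      rw [dist_eq_norm]; linarith only [hxs, hr]
    have h2 : dist θ t₀ < r := by
      rw [Real.dist_eq, abs_lt]
      have hτs' := abs_lt.1 hτs
      constructor
      · linarith only [hθmem.1, hinvr, hτs'.1]
      · linarith only [hθmem.2, hτs'.2, hr]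
    exact max_lt h1 h2
  have hdistG : dist (xs, τs) (x₀, t₀) < r := by
    rw [Prod.dist_eq]
    have h1 : dist xs x₀ < r := by
      rw [dist_eq_norm]; linarith only [hxs, hr]
    have h2 : dist τs t₀ < r := by
      rw [Real.dist_eq]
      linarith only [hτs, hr]
    exact max_lt h1 h2
  have hT1 : |T (xs, θ) - T (x₀, t₀)| < ρ' / 2 := by
    have := hTr (lt_of_lt_of_le hdistτ (le_trans (min_le_left _ _) (min_le_right _ _)))
    rwa [Real.dist_eq] at this
  have hG1 : |G (xs, τs) - G (x₀, t₀)| < ρ' / 2 := by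
    have := hGr (lt_of_lt_of_le hdistG (le_trans (min_le_left _ _) (min_le_left _ _)))
    rwa [Real.dist_eq] at this
  have hT1' := abs_lt.1 hT1
  have hG1' := abs_lt.1 hG1
  rw [← hT0, ← hG0]
  linarith only [hT1'.1, hT1'.2, hG1'.1, hG1'.2, hTθ]

lemma aMat_gradient_neg (ψ : E n → ℝ) (x : E n) (i j : Fin n) :
    aMat n (gradient (fun y => -(ψ y)) x) i j = aMat n (gradient ψ x) i j := by
  have hg : gradient (fun y => -(ψ y)) x = -(gradient ψ x) := by
    rw [gradient, gradient, fderiv_fun_neg, map_neg]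
  rw [hg, aMat, aMat, norm_neg]
  have h1 : (-(gradient ψ x)) i = -(gradient ψ x i) := rfl
  have h2 : (-(gradient ψ x)) j = -(gradient ψ x j) := rfl
  rw [h1, h2]
  ring

lemma secondD_neg (ψ : E n → ℝ) (x : E n) (i j : Fin n) :
    secondD n (fun y => -(ψ y)) x i j = -(secondD n ψ x i j) := by
  rw [secondD, secondD]
  have h1 : (fun y => fderiv ℝ (fun z => -(ψ z)) y (EuclideanSpace.single j 1))
      = fun y => -(fderiv ℝ ψ y (EuclideanSpace.single j 1)) := by
    funext y; rw [fderiv_fun_neg]; rfl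
  rw [h1, fderiv_fun_neg]; rfl

lemma sum_aMat_secondD_neg (ψ : E n → ℝ) (x : E n) :
    ∑ i, ∑ j, aMat n (gradient (fun y => -(ψ y)) x) i j
        * secondD n (fun y => -(ψ y)) x i j
      = -(∑ i, ∑ j, aMat n (gradient ψ x) i j * secondD n ψ x i j) := by
  rw [← Finset.sum_neg_distrib]
  refine Finset.sum_congr rfl fun i _ => ?_
  rw [← Finset.sum_neg_distrib]
  refine Finset.sum_congr rfl fun j _ => ?_
  rw [aMat_gradient_neg, secondD_neg, mul_neg]

lemma InB_neg (g : E n → ℝ) (hg : InB n g) : InB n (fun y => -(g y)) := by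
  obtain ⟨⟨Mb, hMb⟩, hc, hp⟩ := hg
  exact ⟨⟨Mb, fun x => by rw [abs_neg]; exact hMb x⟩, hc.neg, fun x k => by
    simp only [neg_inj]; exact hp x k⟩

lemma resolvent_neg (lam : ℝ) (g w : E n → ℝ)
    (h : IsViscosityResolvent n lam g w) :
    IsViscosityResolvent n lam (fun y => -(g y)) (fun y => -(w y)) := by
  obtain ⟨hc, hsub, hsup⟩ := h
  refine ⟨hc.neg, ?_, ?_⟩
  · intro x ψ hψ hmx
    have hmn : ∀ y, w x - (-(ψ x)) ≤ w y - (-(ψ y)) := fun y => by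
      have := hmx y; simp only at this ⊢; linarith
    have h2 := hsup x (fun z => -(ψ z)) hψ.neg hmn
    rw [sum_aMat_secondD_neg ψ x] at h2
    simp only
    linarith
  · intro x ψ hψ hmx
    have hmn : ∀ y, w y - (-(ψ y)) ≤ w x - (-(ψ x)) := fun y => by
      have := hmx y; simp only at this ⊢; linarith
    have h2 := hsub x (fun z => -(ψ z)) hψ.neg hmn
    rw [sum_aMat_secondD_neg ψ x] at h2
    simp only
    linarith

lemma TUO_neg {α : Type*} {F : ℕ → α → ℝ} {f : α → ℝ} {S : Set α}
    (h : TendstoUniformlyOn F f atTop S) :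
    TendstoUniformlyOn (fun s p => -(F s p)) (fun p => -(f p)) atTop S := by
  rw [Metric.tendstoUniformlyOn_iff] at h ⊢
  intro ε hε
  filter_upwards [h ε hε] with s hs p hp
  have := hs p hp
  rwa [show dist (-(f p)) (-(F s p)) = dist (f p) (F s p) from dist_neg_neg _ _]

/-- the Crandall–Liggett iterated-resolvent approximations
converge to a viscosity solution of the graph mean curvature flow. -/
theorem stmt_17 (n : ℕ) (hn : 1 ≤ n)
    (J : ℝ → (E n → ℝ) → (E n → ℝ))
    (hJ : ∀ lam : ℝ, 0 < lam → ∀ g : E n → ℝ, InB n g →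
      InB n (J lam g) ∧ IsViscosityResolvent n lam g (J lam g))
    (f : E n → ℝ) (hf : InB n f)
    (u : E n → ℝ → ℝ)
    (hucont : ContinuousOn (fun p : E n × ℝ => u p.1 p.2) {p : E n × ℝ | 0 < p.2})
    (hconv : ∀ K : Set ℝ, IsCompact K → K ⊆ Set.Ioi (0 : ℝ) →
      TendstoUniformlyOn
        (fun (s : ℕ) (p : E n × ℝ) => (J (1 / (s : ℝ)))^[⌊p.2 * (s : ℝ)⌋₊] f p.1)
        (fun p : E n × ℝ => u p.1 p.2) atTop (Set.univ ×ˢ K)) :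
    IsViscosityFlow n u := by
  constructor
  · intro x t ht φ hφ hmax
    exact subHalf n J hJ f hf u hucont hconv x t ht φ hφ hmax
  · intro x t ht φ hφ hmin
    set J' : ℝ → (E n → ℝ) → (E n → ℝ) :=
      fun lam h => fun y => -(J lam (fun z => -(h z)) y) with hJ'def
    have hJ' : ∀ lam : ℝ, 0 < lam → ∀ g : E n → ℝ, InB n g →
        InB n (J' lam g) ∧ IsViscosityResolvent n lam g (J' lam g) := by
      intro lam hlam g hg
      have h2 := hJ lam hlam (fun z => -(g z)) (InB_neg g hg)
      have hgg : (fun y => -((fun z => -(g z)) y)) = g := by funext y; simp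
      constructor
      · exact InB_neg _ h2.1
      · have h3 := resolvent_neg lam _ _ h2.2
        rwa [hgg] at h3
    have hiter' : ∀ (lam : ℝ) (k : ℕ),
        (J' lam)^[k] (fun y => -(f y)) = fun y => -((J lam)^[k] f y) := by
      intro lam k
      induction k with
      | zero => rfl
      | succ k ih =>
        rw [Function.iterate_succ_apply', Function.iterate_succ_apply', ih]
        have hgg : (fun z => -(-((J lam)^[k] f z))) = (J lam)^[k] f := by
          funext z; simp
        show (fun y => -(J lam (fun z => -(-((J lam)^[k] f z))) y))
            = fun y => -(J lam ((J lam)^[k] f) y)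
        rw [hgg]
    have hconv' : ∀ K : Set ℝ, IsCompact K → K ⊆ Set.Ioi (0 : ℝ) →
        TendstoUniformlyOn
          (fun (s : ℕ) (p : E n × ℝ) =>
            (J' (1 / (s : ℝ)))^[⌊p.2 * (s : ℝ)⌋₊] (fun y => -(f y)) p.1)
          (fun p : E n × ℝ => -(u p.1 p.2)) atTop (Set.univ ×ˢ K) := by
      intro K hK hK0
      have h1 := TUO_neg (hconv K hK hK0)
      refine h1.congr ?_
      filter_upwards with s
      intro p _
      show -((J (1 / (s : ℝ)))^[⌊p.2 * (s : ℝ)⌋₊] f p.1)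
          = (J' (1 / (s : ℝ)))^[⌊p.2 * (s : ℝ)⌋₊] (fun y => -(f y)) p.1
      rw [hiter' (1 / (s : ℝ)) ⌊p.2 * (s : ℝ)⌋₊]
    have hu'cont : ContinuousOn (fun p : E n × ℝ => -(u p.1 p.2))
        {p : E n × ℝ | 0 < p.2} := hucont.neg
    have hφ' : ContDiff ℝ (⊤ : ℕ∞) (fun p : E n × ℝ => -(φ p.1 p.2)) := hφ.neg
    have hmax' : ∀ y s', 0 < s' →
        (-(u y s')) - (-(φ y s')) ≤ (-(u x t)) - (-(φ x t)) := fun y s' hs' => by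
      have := hmin y s' hs'; linarith
    have H := subHalf n J' hJ' (fun y => -(f y)) (InB_neg f hf)
      (fun y τ => -(u y τ)) hu'cont hconv' x t ht (fun y τ => -(φ y τ)) hφ' hmax'
    rw [deriv.fun_neg] at H
    have h2 := sum_aMat_secondD_neg (fun y => φ y t) x
    linarith only [H, h2]

end
end
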